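/- arXiv:1003.3948 — 6 statements merged into one kernel-verified Lean document; each statement's English description precedes it below -/
import Mathlib

section
/- For every integer k ≥ 1 and every r ∈ ℤ/nℤ, the alternating sum Σ_{i=0}^{k} (−1)^i · e_i^{(r−i)}(x_1,…,x_m) · h_{k−i}^{(r−i−1)}(x_1,…,x_m) equals 0 in the polynomial ring. -/
noncomputable section

open Finset MvPolynomial

open Classical in
/-- Loop elementary symmetric function `e_k^{(s)}(x_1, …, x_m)`; zero for `k < 0` (and
automatically zero for `k > m`).  The variable `x_i^{(s)}` is `X (i-1, s)`. -/
def lE (n m : ℕ) (k : ℤ) (s : ZMod n) : MvPolynomial (Fin m × ZMod n) ℤ :=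
  if 0 ≤ k then
    ∑ f ∈ Finset.univ.filter (fun f : Fin k.toNat → Fin m => StrictMono f),
      ∏ j : Fin k.toNat, MvPolynomial.X (f j, s + ((j : ℕ) : ZMod n))
  else 0

open Classical in
/-- Loop complete homogeneous symmetric function `h_k^{(s)}(x_1, …, x_m)`; zero for `k < 0`. -/
def lH (n m : ℕ) (k : ℤ) (s : ZMod n) : MvPolynomial (Fin m × ZMod n) ℤ :=
  if 0 ≤ k then
    ∑ f ∈ Finset.univ.filter (fun f : Fin k.toNat → Fin m => Monotone f),
      ∏ j : Fin k.toNat, MvPolynomial.X (f j, s - ((j : ℕ) : ZMod n))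
  else 0

/-!
Expanding `e_i^{(r-i)} h_{k-i}^{(r-i-1)}` into monomials, every term is `∏ⱼ x_{aⱼ}^{(r-1-j)}` for
a word `a` of length `k` that strictly decreases on its first `i` letters and weakly increases
on the remaining ones (the `e`-factor read backwards, followed by the `h`-factor), and each such
word arises exactly once. For a fixed word the admissible split points `i` are either none or
exactly two consecutive integers, so the signs `(-1)^i` cancel word by word.
-/

theorem sum_neg_one_pow_eq_zero_of_consecutive {R : Type*} [Ring R] (S : Finset ℕ)
    (hgap : ∀ i ∈ S, ∀ j ∈ S, j ≤ i + 1) (hne : ∀ i ∈ S, ∃ j ∈ S, j ≠ i) :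
    ∑ i ∈ S, (-1 : R) ^ i = 0 := by
  rcases S.eq_empty_or_nonempty with rfl | hS
  · simp
  set i := S.min' hS
  have hi : i ∈ S := S.min'_mem hS
  have hbetween : ∀ j ∈ S, i ≤ j ∧ j ≤ i + 1 := fun j hj => ⟨S.min'_le j hj, hgap i hi j hj⟩
  have hpair : S = {i, i + 1} := by
    obtain ⟨j, hj, hji⟩ := hne i hi
    obtain rfl : j = i + 1 := by have := hbetween j hj; omega
    ext x
    simp only [mem_insert, mem_singleton]
    refine ⟨fun hx => ?_, ?_⟩
    · have := hbetween x hx; omega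
    · rintro (rfl | rfl) <;> assumption
  rw [hpair, sum_pair (by omega), pow_succ]
  simp

section Valley

variable {α : Type*} [LinearOrder α] {k : ℕ}

def IsValleySplit (i : ℕ) (a : Fin k → α) : Prop :=
  StrictAntiOn a {j | (j : ℕ) < i} ∧ MonotoneOn a {j | i ≤ (j : ℕ)}

theorem isValleySplit_append_iff {i l : ℕ} (u : Fin i → α) (v : Fin l → α) :
    IsValleySplit i (Fin.append u v) ↔ StrictAnti u ∧ Monotone v := by
  constructor
  · rintro ⟨hanti, hmono⟩
    refine ⟨fun x y hxy => ?_, fun x y hxy => ?_⟩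
    · simpa using hanti (by simp) (by simp) (Fin.strictMono_castAdd l hxy)
    · simpa using hmono (by simp) (by simp) ((Fin.natAdd_le_natAdd_iff i).mpr hxy)
  · rintro ⟨hu, hv⟩
    constructor
    · intro x hx y hy hxy
      induction x using Fin.addCases with
      | right x => simp at hx
      | left x =>
        induction y using Fin.addCases with
        | right y => simp at hy
        | left y => simpa using hu ((Fin.strictMono_castAdd l).lt_iff_lt.mp hxy)
    · intro x hx y hy hxy
      induction x using Fin.addCases with
      | left x => simp only [Set.mem_ofPred_eq, Fin.val_castAdd] at hx; omega
      | right x =>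
        induction y using Fin.addCases with
        | left y => simp only [Set.mem_ofPred_eq, Fin.val_castAdd] at hy; omega
        | right y => simpa using hv ((Fin.natAdd_le_natAdd_iff i).mp hxy)

namespace IsValleySplit

variable {a : Fin k → α} {i : ℕ}

theorem le_add_one {j : ℕ} (hi : IsValleySplit i a) (hj : IsValleySplit j a) (hjk : j ≤ k) :
    j ≤ i + 1 := by
  by_contra! hij
  have hdesc : a ⟨i + 1, by omega⟩ < a ⟨i, by omega⟩ :=
    hj.1 (show i < j by omega) (show i + 1 < j by omega) (Fin.lt_def.mpr i.lt_succ_self)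
  have hasc : a ⟨i, by omega⟩ ≤ a ⟨i + 1, by omega⟩ :=
    hi.2 (le_refl i) i.le_succ (Fin.le_def.mpr i.le_succ)
  exact hasc.not_gt hdesc

theorem succ (hi : IsValleySplit i a) (hik : i < k)
    (hdesc : ∀ h : 0 < i, a ⟨i, hik⟩ < a ⟨i - 1, by omega⟩) : IsValleySplit (i + 1) a := by
  refine ⟨fun x _ y (hy : (y : ℕ) < i + 1) hxy => ?_, hi.2.mono fun x hx => Nat.le_of_succ_le hx⟩
  rw [Fin.lt_def] at hxy
  rcases (Nat.lt_succ_iff.mp hy).lt_or_eq with hy | hy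
  · exact hi.1 (show (x : ℕ) < i by omega) hy (Fin.lt_def.mpr hxy)
  · obtain rfl : y = ⟨i, hik⟩ := Fin.ext hy
    exact (hdesc (by omega)).trans_le (hi.1.antitoneOn hxy (show i - 1 < i by omega)
      (Fin.le_def.mpr (show (x : ℕ) ≤ i - 1 by omega)))

theorem pred (hi : IsValleySplit i a) (hi0 : 0 < i)
    (hasc : ∀ h : i < k, a ⟨i - 1, by omega⟩ ≤ a ⟨i, h⟩) : IsValleySplit (i - 1) a := by
  refine ⟨hi.1.mono fun x hx => ?_, fun x hx y hy hxy => ?_⟩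
  · exact hx.trans_le (Nat.sub_le i 1)
  simp only [Set.mem_ofPred_eq] at hx hy
  rw [Fin.le_def] at hxy
  rcases Nat.lt_or_ge (x : ℕ) i with hx' | hx'
  · rcases Nat.lt_or_ge (y : ℕ) i with hy' | hy'
    · obtain rfl : y = x := Fin.ext (by omega)
      exact le_rfl
    have hxi : x = ⟨i - 1, by omega⟩ := Fin.ext (by simp only; omega)
    rw [hxi]
    exact (hasc (by omega)).trans (hi.2 (le_refl i) hy' (Fin.le_def.mpr hy'))
  · exact hi.2 hx' (show i ≤ (y : ℕ) by omega) (Fin.le_def.mpr hxy)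

theorem exists_ne (hi : IsValleySplit i a) (hk : 0 < k) (hik : i ≤ k) :
    ∃ j ≤ k, j ≠ i ∧ IsValleySplit j a := by
  by_cases hdesc : ∃ hik : i < k, ∀ h : 0 < i, a ⟨i, hik⟩ < a ⟨i - 1, by omega⟩
  · obtain ⟨hik, hdesc⟩ := hdesc
    exact ⟨i + 1, by omega, by omega, hi.succ hik hdesc⟩
  · push Not at hdesc
    have hi0 : 0 < i := by
      rcases hik.lt_or_eq with hik | rfl
      · exact (hdesc hik).1
      · exact hk
    exact ⟨i - 1, by omega, by omega, hi.pred hi0 fun h => (hdesc h).2⟩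

end IsValleySplit

open Classical in
theorem sum_neg_one_pow_isValleySplit {R : Type*} [Ring R] (hk : 0 < k) (a : Fin k → α) :
    ∑ i ∈ (range (k + 1)).filter (IsValleySplit · a), (-1 : R) ^ i = 0 := by
  refine sum_neg_one_pow_eq_zero_of_consecutive _ (fun i hi j hj => ?_) (fun i hi => ?_)
  · simp only [mem_filter, mem_range] at hi hj
    exact hi.2.le_add_one hj.2 (by omega)
  · simp only [mem_filter, mem_range] at hi ⊢
    obtain ⟨j, hjk, hji, hj⟩ := hi.2.exists_ne hk (by omega)
    exact ⟨j, ⟨by omega, hj⟩, hji⟩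

end Valley

section LoopWords

variable {n m : ℕ}

theorem lE_natCast (k : ℕ) (s : ZMod n) :
    lE n m k s = ∑ f ∈ univ.filter (fun f : Fin k → Fin m => StrictMono f),
      ∏ j : Fin k, X (f j, s + (j : ℕ)) := by
  simp [lE]

theorem lH_natCast (k : ℕ) (s : ZMod n) :
    lH n m k s = ∑ f ∈ univ.filter (fun f : Fin k → Fin m => Monotone f),
      ∏ j : Fin k, X (f j, s - (j : ℕ)) := by
  simp [lH]

-- Reversing the `e`-word makes the colours decrease by one along the whole concatenated word.
theorem prod_X_append_rev {i l : ℕ} (r : ZMod n) (f : Fin i → Fin m) (g : Fin l → Fin m) :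
    ∏ j : Fin (i + l), (X (Fin.append (f ∘ Fin.rev) g j, r - 1 - (j : ℕ)) :
      MvPolynomial (Fin m × ZMod n) ℤ) =
    (∏ j : Fin i, X (f j, r - i + (j : ℕ))) * ∏ j : Fin l, X (g j, r - i - 1 - (j : ℕ)) := by
  rw [Fin.prod_univ_add]
  congr 1
  · refine Fintype.prod_equiv Fin.revPerm _ _ fun j => ?_
    have hj : ((j.rev : ℕ) : ZMod n) + j + 1 = i := by
      have h : (j.rev : ℕ) + j + 1 = i := by rw [Fin.val_rev]; omega
      exact_mod_cast congrArg (Nat.cast : ℕ → ZMod n) h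
    rw [Fin.append_left, Function.comp_apply, Fin.revPerm_apply, Fin.val_castAdd, ← hj]
    ring_nf
  · refine Fintype.prod_congr _ _ fun j => ?_
    rw [Fin.append_right, Fin.val_natAdd, Nat.cast_add]
    ring_nf

open Classical in
theorem lE_mul_lH_eq_sum_isValleySplit {i l k : ℕ} (h : i + l = k) (r : ZMod n) :
    lE n m i (r - i) * lH n m l (r - i - 1) =
      ∑ a ∈ univ.filter (fun a : Fin k → Fin m => IsValleySplit i a),
        ∏ j : Fin k, X (a j, r - 1 - (j : ℕ)) := by
  subst h
  rw [lE_natCast, lH_natCast, sum_mul_sum, ← sum_product']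
  refine sum_nbij' (fun p => Fin.append (p.1 ∘ Fin.rev) p.2)
    (fun a => (fun j => a (Fin.castAdd l j.rev), fun j => a (Fin.natAdd i j)))
    ?_ ?_ ?_ ?_ fun p _ => (prod_X_append_rev r p.1 p.2).symm
  · intro p hp
    rw [mem_product, mem_filter, mem_filter] at hp
    simpa [isValleySplit_append_iff] using ⟨hp.1.2.comp_strictAnti Fin.rev_strictAnti, hp.2.2⟩
  · intro a ha
    rw [mem_filter, ← Fin.append_castAdd_natAdd (f := a), isValleySplit_append_iff] at ha
    simpa using ⟨ha.2.1.comp Fin.rev_strictAnti, ha.2.2⟩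
  · intro p _
    simp [Function.comp_def]
  · intro a _
    simp [Function.comp_def, Fin.append_castAdd_natAdd]

end LoopWords

theorem loop_eh_alternating_sum_general (n m k : ℕ) (hk : 1 ≤ k)
    (r : ZMod n) :
    ∑ i ∈ Finset.range (k + 1),
      (-1 : MvPolynomial (Fin m × ZMod n) ℤ) ^ i *
        lE n m (i : ℤ) (r - (i : ZMod n)) *
        lH n m ((k - i : ℕ) : ℤ) (r - (i : ZMod n) - 1) = 0 := by
  classical
  calc _ = ∑ i ∈ range (k + 1), ∑ a ∈ univ.filter (fun a : Fin k → Fin m => IsValleySplit i a),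
          (-1 : MvPolynomial (Fin m × ZMod n) ℤ) ^ i * ∏ j : Fin k, X (a j, r - 1 - (j : ℕ)) :=
        sum_congr rfl fun i hi => by
          have hik : i + (k - i) = k := by rw [mem_range] at hi; omega
          rw [mul_assoc, lE_mul_lH_eq_sum_isValleySplit hik, mul_sum]
    _ = ∑ a : Fin k → Fin m, ∑ i ∈ (range (k + 1)).filter (IsValleySplit · a),
          (-1 : MvPolynomial (Fin m × ZMod n) ℤ) ^ i * ∏ j : Fin k, X (a j, r - 1 - (j : ℕ)) :=
        sum_comm' fun i a => by simp
    _ = 0 := sum_eq_zero fun a _ => by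
        rw [← sum_mul, sum_neg_one_pow_isValleySplit hk, zero_mul]

/-- for `k ≥ 1` the alternating sum
`Σ_{i=0}^{k} (−1)^i e_i^{(r−i)} h_{k−i}^{(r−i−1)}` vanishes. -/
theorem loop_eh_alternating_sum (n m k : ℕ) (hn : 1 < n) (hm : 1 ≤ m) (hk : 1 ≤ k)
    (r : ZMod n) :
    ∑ i ∈ Finset.range (k + 1),
      (-1 : MvPolynomial (Fin m × ZMod n) ℤ) ^ i *
        lE n m (i : ℤ) (r - (i : ZMod n)) *
        lH n m ((k - i : ℕ) : ℤ) (r - (i : ZMod n) - 1) = 0 :=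
  loop_eh_alternating_sum_general n m k hk r

end
end

section
/- For every integer k ≥ 0 and every r ∈ ℤ/nℤ, one has τ_k^{(r)}(x_1,…,x_m) = Σ_{i≥0} (−1)^i · h_{k−in}^{(r)}(x_1,…,x_m) · e_i(p_1,…,p_m), where p_j = ∏_{s∈ℤ/nℤ} x_j^{(s)} and e_i denotes the classical i-th elementary symmetric polynomial in m arguments (so e_i = 0 for i > m); the sum is finite since h with negative subscript vanishes. -/
/-!
A weakly increasing index sequence `i₁ ≤ ⋯ ≤ i_k` is determined by its multiplicity vector
`c : Fin m → ℕ`, so its monomial is the loop monomial of the sorted word `1^{c₁} 2^{c₂} ⋯`.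
Inserting `n` consecutive copies of a letter `j` into a word multiplies its loop monomial by
`p_j`: the inserted block runs through all `n` colors, and the colors after it shift by
`n ≡ 0`. Hence `h_{k - |S| n} ∏_{j ∈ S} p_j` is the sum over the multiplicity vectors of total `k`
with `c_j ≥ n` for all `j ∈ S`. Writing `e_i = ∑_{|S| = i} ∏_{j ∈ S} p_j`, the right-hand side
becomes an inclusion–exclusion over `S` which leaves exactly the vectors with all `c_j ≤ n - 1`,
i.e. `τ_k`.
-/

noncomputable section

open Finset MvPolynomial

open Classical in
/-- `τ_k^{(s)}(x_a, …, x_b)` (1-indexed window `a ≤ i ≤ b`): the sum over weakly increasing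
sequences `a ≤ i_1 ≤ ⋯ ≤ i_k ≤ b` in which no value occurs more than `n - 1` times of
`x_{i_1}^{(s)} x_{i_2}^{(s-1)} ⋯ x_{i_k}^{(s-k+1)}`; zero for `k < 0`. -/
def lT (n m a b : ℕ) (k : ℤ) (s : ZMod n) : MvPolynomial (Fin m × ZMod n) ℤ :=
  if 0 ≤ k then
    ∑ f ∈ Finset.univ.filter (fun f : Fin k.toNat → Fin m =>
        Monotone f ∧ (∀ j, a ≤ (f j : ℕ) + 1 ∧ (f j : ℕ) + 1 ≤ b) ∧
        ∀ v : Fin m, (Finset.univ.filter (fun j => f j = v)).card ≤ n - 1),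
      ∏ j : Fin k.toNat, MvPolynomial.X (f j, s - ((j : ℕ) : ZMod n))
  else 0

open Classical in
/-- The classical elementary symmetric polynomial `e_i(p_1, …, p_m)` evaluated at the
color products `p_j = ∏_{s ∈ ℤ/nℤ} x_j^{(s)}`. -/
def eP (n m i : ℕ) : MvPolynomial (Fin m × ZMod n) ℤ :=
  ∑ g ∈ Finset.univ.filter (fun g : Fin i → Fin m => StrictMono g),
    ∏ j : Fin i, ∏ s ∈ Finset.range n, MvPolynomial.X (g j, (s : ZMod n))

section LoopMonomial

variable {σ R : Type*} [CommSemiring R] {n : ℕ}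

def loopMonomial : ZMod n → List σ → MvPolynomial (σ × ZMod n) R
  | _, [] => 1
  | s, a :: l => X (a, s) * loopMonomial (s - 1) l

theorem prod_X_eq_loopMonomial_ofFn {k : ℕ} (f : Fin k → σ) (s : ZMod n) :
    ∏ j : Fin k, (X (f j, s - ((j : ℕ) : ZMod n)) : MvPolynomial (σ × ZMod n) R) =
      loopMonomial s (List.ofFn f) := by
  induction k generalizing s with
  | zero => simp [loopMonomial]
  | succ k ih =>
    rw [Fin.prod_univ_succ, List.ofFn_succ, loopMonomial, ← ih]
    simp only [Fin.val_zero, Nat.cast_zero, sub_zero, Fin.val_succ, Nat.cast_succ,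
      sub_add_eq_sub_sub_swap]

theorem loopMonomial_append (s : ZMod n) (l₁ l₂ : List σ) :
    (loopMonomial s (l₁ ++ l₂) : MvPolynomial (σ × ZMod n) R) =
      loopMonomial s l₁ * loopMonomial (s - (l₁.length : ZMod n)) l₂ := by
  induction l₁ generalizing s with
  | nil => simp [loopMonomial]
  | cons a l ih =>
    simp only [List.cons_append, loopMonomial, ih, List.length_cons, Nat.cast_succ, mul_assoc,
      sub_add_eq_sub_sub_swap]

theorem loopMonomial_replicate (s : ZMod n) (k : ℕ) (a : σ) :
    (loopMonomial s (List.replicate k a) : MvPolynomial (σ × ZMod n) R) =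
      ∏ t ∈ range k, X (a, s - (t : ZMod n)) := by
  rw [← List.ofFn_const, ← prod_X_eq_loopMonomial_ofFn, Fin.prod_univ_eq_prod_range
    (fun t => (X (a, s - (t : ZMod n)) : MvPolynomial (σ × ZMod n) R))]

def colorProd (a : σ) : MvPolynomial (σ × ZMod n) R :=
  ∏ t ∈ range n, X (a, (t : ZMod n))

theorem loopMonomial_replicate_self [NeZero n] (s : ZMod n) (a : σ) :
    (loopMonomial s (List.replicate n a) : MvPolynomial (σ × ZMod n) R) = colorProd a := by
  have range_eq_univ (g : ZMod n → MvPolynomial (σ × ZMod n) R) :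
      ∏ t ∈ range n, g t = ∏ u : ZMod n, g u :=
    prod_nbij' (↑) ZMod.val (by simp) (by simp [ZMod.val_lt])
      (fun t ht => ZMod.val_cast_of_lt (mem_range.1 ht)) (fun u _ => ZMod.natCast_zmod_val u)
      (fun _ _ => rfl)
  rw [loopMonomial_replicate, colorProd, range_eq_univ (fun u => X (a, s - u)),
    range_eq_univ (fun u => X (a, u))]
  exact Fintype.prod_equiv (Equiv.subLeft s) _ _ fun _ => rfl

theorem loopMonomial_replicate_mul [NeZero n] (s : ZMod n) (e : ℕ) (a : σ) :
    (loopMonomial s (List.replicate (n * e) a) : MvPolynomial (σ × ZMod n) R) =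
      colorProd a ^ e := by
  induction e with
  | zero => simp [loopMonomial]
  | succ e ih =>
    rw [mul_add_one, List.replicate_add, loopMonomial_append, ih, List.length_replicate,
      loopMonomial_replicate_self, pow_succ]

end LoopMonomial

section SortedWord

variable {m : ℕ}

def sortedWord (c : Fin m → ℕ) : List (Fin m) :=
  (List.finRange m).flatMap fun v => List.replicate (c v) v

theorem sortedLE_sortedWord (c : Fin m → ℕ) : (sortedWord c).SortedLE := by
  refine List.Pairwise.sortedLE (List.pairwise_flatMap.2 ⟨fun v _ => by simp, ?_⟩)
  refine (List.pairwise_lt_finRange m).imp fun hvw x hx y hy => ?_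
  rw [List.eq_of_mem_replicate hx, List.eq_of_mem_replicate hy]
  exact hvw.le

theorem count_sortedWord (c : Fin m → ℕ) (v : Fin m) : (sortedWord c).count v = c v := by
  simp [sortedWord, List.count_flatMap, List.count_replicate, Function.comp_def, List.sum_map_ite,
    List.filter_eq, List.count_finRange]

theorem length_sortedWord (c : Fin m → ℕ) : (sortedWord c).length = ∑ v, c v := by
  simp [sortedWord, List.length_flatMap, ← Fin.sum_univ_def]

theorem eq_sortedWord_count {l : List (Fin m)} (hl : l.SortedLE) :
    l = sortedWord fun v => l.count v :=
  (List.perm_iff_count.2 fun v => (count_sortedWord (fun v => l.count v) v).symm).eq_of_sortedLE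
    hl (sortedLE_sortedWord _)

theorem count_ofFn {k : ℕ} (f : Fin k → Fin m) (v : Fin m) :
    (List.ofFn f).count v = #{j | f j = v} := by
  rw [← Multiset.coe_count, ← Fin.univ_val_map, Multiset.count_map, card_def, filter_val]
  simp only [eq_comm]

theorem ofFn_eq_sortedWord {k : ℕ} {f : Fin k → Fin m} (hf : Monotone f) :
    List.ofFn f = sortedWord fun v => #{j | f j = v} := by
  simp only [← count_ofFn]
  exact eq_sortedWord_count (List.sortedLE_ofFn_iff.2 hf)

open Classical in
theorem sum_monotone_eq_sum_antidiagonalTuple {M : Type*} [AddCommMonoid M] (k : ℕ)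
    (p : (Fin m → ℕ) → Prop) [DecidablePred p] (F : List (Fin m) → M) :
    ∑ f ∈ univ.filter (fun f : Fin k → Fin m => Monotone f ∧ p fun v => #{j | f j = v}),
        F (List.ofFn f) =
      ∑ c ∈ (Nat.antidiagonalTuple m k).filter p, F (sortedWord c) := by
  refine sum_nbij (fun f v => #{j | f j = v}) ?_ ?_ ?_ ?_
  · intro f hf
    simp only [mem_filter, mem_univ, true_and] at hf ⊢
    refine ⟨Nat.mem_antidiagonalTuple.2 ?_, hf.2⟩
    rw [← length_sortedWord, ← ofFn_eq_sortedWord hf.1, List.length_ofFn]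
  · intro f₁ hf₁ f₂ hf₂ h
    simp only [mem_coe, mem_filter, mem_univ, true_and] at hf₁ hf₂
    exact List.ofFn_injective <| by
      rw [ofFn_eq_sortedWord hf₁.1, ofFn_eq_sortedWord hf₂.1]
      exact congrArg sortedWord h
  · intro c hc
    simp only [mem_coe, mem_filter, Nat.mem_antidiagonalTuple] at hc
    have hlen : (sortedWord c).length = k := by rw [length_sortedWord, hc.1]
    set g : Fin k → Fin m := fun j => (sortedWord c)[(j : ℕ)]'(hlen ▸ j.2)
    have hofFn : List.ofFn g = sortedWord c := by
      subst hlen; exact List.ofFn_getElem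
    have hcount : (fun v => #{j | g j = v}) = c := by
      funext v; rw [← count_ofFn, hofFn, count_sortedWord]
    refine ⟨g, ?_, hcount⟩
    simp only [mem_coe, mem_filter, mem_univ, true_and, hcount]
    exact ⟨List.sortedLE_ofFn_iff.1 (hofFn ▸ sortedLE_sortedWord c), hc.2⟩
  · intro f hf
    simp only [mem_filter, mem_univ, true_and] at hf
    rw [ofFn_eq_sortedWord hf.1]

end SortedWord

section Shift

variable {σ R : Type*} [CommSemiring R] {n : ℕ} [NeZero n]

theorem loopMonomial_flatMap_replicate_add_mul (s : ZMod n) (c e : σ → ℕ) (L : List σ) :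
    (loopMonomial s (L.flatMap fun v => List.replicate (c v + n * e v) v) :
        MvPolynomial (σ × ZMod n) R) =
      loopMonomial s (L.flatMap fun v => List.replicate (c v) v) *
        (L.map fun v => colorProd v ^ e v).prod := by
  induction L generalizing s with
  | nil => simp [loopMonomial]
  | cons v L ih =>
    have hshift : s - (c v : ZMod n) - ((n * e v : ℕ) : ZMod n) = s - (c v : ZMod n) := by simp
    rw [List.flatMap_cons, List.flatMap_cons, List.replicate_add, List.append_assoc,
      loopMonomial_append, loopMonomial_append, List.length_replicate, loopMonomial_append,
      List.length_replicate, loopMonomial_replicate_mul, hshift, ih, List.map_cons, List.prod_cons,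
      List.length_replicate]
    ring

theorem loopMonomial_sortedWord_add_nsmul {m : ℕ} (s : ZMod n) (c e : Fin m → ℕ) :
    (loopMonomial s (sortedWord (c + n • e)) : MvPolynomial (Fin m × ZMod n) R) =
      loopMonomial s (sortedWord c) * ∏ v, colorProd v ^ e v := by
  simpa [sortedWord, Fin.prod_univ_def] using
    loopMonomial_flatMap_replicate_add_mul (R := R) s c e (List.finRange m)

end Shift

theorem sum_antidiagonalTuple_add {M : Type*} [AddCommMonoid M] (m k : ℕ) (d : Fin m → ℕ)
    (G : (Fin m → ℕ) → M) :
    ∑ c ∈ Nat.antidiagonalTuple m k, G (c + d) =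
      ∑ c ∈ (Nat.antidiagonalTuple m (k + ∑ v, d v)).filter (fun c => ∀ v, d v ≤ c v), G c := by
  refine sum_nbij' (· + d) (· - d) ?_ ?_ ?_ ?_ fun _ _ => rfl
  · intro c hc
    simp only [Nat.mem_antidiagonalTuple] at hc
    simp [mem_filter, Nat.mem_antidiagonalTuple, sum_add_distrib, hc]
  · intro c hc
    simp only [mem_filter, Nat.mem_antidiagonalTuple] at hc ⊢
    have hsum := congrArg (fun f => ∑ v, f v) (tsub_add_cancel_of_le (show d ≤ c from hc.2))
    simp only [Pi.add_apply, sum_add_distrib, hc.1] at hsum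
    omega
  · exact fun c _ => add_tsub_cancel_right c d
  · exact fun c hc => tsub_add_cancel_of_le (show d ≤ c from (mem_filter.1 hc).2)

section LoopSymmetric

variable {n m : ℕ}

theorem lH_natCast_s2 (k : ℕ) (r : ZMod n) :
    lH n m k r = ∑ c ∈ Nat.antidiagonalTuple m k, loopMonomial r (sortedWord c) := by
  classical
  rw [lH, if_pos (Int.natCast_nonneg k), Int.toNat_natCast]
  have h := sum_monotone_eq_sum_antidiagonalTuple (m := m) k (fun _ => True)
    (loopMonomial (R := ℤ) r)
  simp only [and_true, filter_true] at h
  rw [← h]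
  convert sum_congr rfl fun f _ => prod_X_eq_loopMonomial_ofFn f r

theorem lH_of_neg {k : ℤ} (hk : k < 0) (r : ZMod n) : lH n m k r = 0 :=
  if_neg (not_le.2 hk)

theorem lT_one_natCast (k : ℕ) (r : ZMod n) :
    lT n m 1 m k r = ∑ c ∈ (Nat.antidiagonalTuple m k).filter (fun c => ∀ v, c v ≤ n - 1),
      loopMonomial r (sortedWord c) := by
  classical
  rw [lT, if_pos (Int.natCast_nonneg k), Int.toNat_natCast]
  refine Eq.trans ?_ (sum_monotone_eq_sum_antidiagonalTuple k _ (loopMonomial r))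
  refine sum_congr (filter_congr fun f _ => ?_) fun f _ => prod_X_eq_loopMonomial_ofFn f r
  have hwindow : ∀ j, 1 ≤ (f j : ℕ) + 1 ∧ (f j : ℕ) + 1 ≤ m := fun j => ⟨by omega, (f j).2⟩
  simp only [hwindow, implies_true, true_and]

theorem eP_eq_sum_powersetCard (i : ℕ) :
    eP n m i = ∑ S ∈ powersetCard i univ, ∏ v ∈ S, colorProd v := by
  classical
  rw [eP]
  refine sum_nbij (fun g => univ.image g) ?_ ?_ ?_ ?_
  · intro g hg
    simp only [mem_filter, mem_univ, true_and] at hg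
    simp [card_image_of_injective _ hg.injective]
  · intro g₁ hg₁ g₂ hg₂ h
    simp only [mem_coe, mem_filter, mem_univ, true_and] at hg₁ hg₂
    rw [← hg₁.range_inj hg₂, ← Fintype.coe_image_univ, ← Fintype.coe_image_univ]
    exact congrArg _ h
  · intro S hS
    obtain ⟨-, hcard⟩ := mem_powersetCard.1 hS
    refine ⟨S.orderEmbOfFin hcard, by simp [(S.orderEmbOfFin hcard).strictMono], ?_⟩
    apply Finset.coe_injective
    rw [Fintype.coe_image_univ, range_orderEmbOfFin]
  · intro g hg
    simp only [mem_filter, mem_univ, true_and] at hg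
    rw [prod_image fun a _ b _ h => hg.injective h]
    rfl

theorem lH_sub_mul_prod_colorProd [NeZero n] (k : ℕ) (r : ZMod n) (S : Finset (Fin m)) :
    lH n m (k - #S * n) r * ∏ v ∈ S, colorProd v =
      ∑ c ∈ (Nat.antidiagonalTuple m k).filter (fun c => ∀ v ∈ S, n ≤ c v),
        loopMonomial r (sortedWord c) := by
  by_cases hk : #S * n ≤ k
  · obtain ⟨k, rfl⟩ : ∃ k', k = k' + #S * n := ⟨k - #S * n, by omega⟩
    let e : Fin m → ℕ := fun v => if v ∈ S then 1 else 0
    have hsum_e : ∑ v, (n • e) v = #S * n := by simp [e, mul_comm]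
    have hprod_e : ∏ v, colorProd (R := ℤ) (n := n) v ^ e v = ∏ v ∈ S, colorProd v := by
      simp [e, pow_ite, prod_ite_mem]
    have hle_iff (c : Fin m → ℕ) : (∀ v, (n • e) v ≤ c v) ↔ ∀ v ∈ S, n ≤ c v := by
      refine ⟨fun h v hv => by simpa [e, hv] using h v, fun h v => ?_⟩
      by_cases hv : v ∈ S <;> simp [e, hv, h]
    rw [show ((k + #S * n : ℕ) : ℤ) - #S * n = k by push_cast; ring, lH_natCast_s2, sum_mul,
      ← hprod_e]
    simp only [← loopMonomial_sortedWord_add_nsmul]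
    rw [sum_antidiagonalTuple_add _ _ _ fun c => loopMonomial r (sortedWord c), hsum_e]
    exact sum_congr (filter_congr fun c _ => hle_iff c) fun _ _ => rfl
  · rw [lH_of_neg (by omega), zero_mul, eq_comm, sum_eq_zero]
    intro c hc
    simp only [mem_filter, Nat.mem_antidiagonalTuple] at hc
    have hS : #S * n ≤ ∑ v ∈ S, c v := by simpa using card_nsmul_le_sum S c n hc.2
    have hsub : ∑ v ∈ S, c v ≤ ∑ v, c v := sum_le_sum_of_subset (subset_univ S)
    omega

end LoopSymmetric

theorem sum_powerset_neg_one_pow_mul_sum_filter {ι α R : Type*} [Fintype ι] [Ring R]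
    (s : Finset α) (P : α → ι → Prop) [∀ a i, Decidable (P a i)] (F : α → R) :
    ∑ S ∈ (univ : Finset ι).powerset,
        (-1 : R) ^ #S * ∑ a ∈ s.filter (fun a => ∀ i ∈ S, P a i), F a =
      ∑ a ∈ s.filter (fun a => ∀ i, ¬ P a i), F a := by
  simp_rw [mul_sum, sum_filter]
  rw [sum_comm]
  refine sum_congr rfl fun a _ => ?_
  have hsubsets : (univ : Finset ι).powerset.filter (fun S => ∀ i ∈ S, P a i) =
      (univ.filter (P a)).powerset := by
    ext S
    simp [subset_iff]
  rw [← sum_filter, hsubsets, ← sum_mul]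
  split_ifs with h
  · simp [h]
  · obtain ⟨i, hi⟩ := not_forall_not.1 h
    have hne : (univ.filter (P a)).Nonempty := ⟨i, by simpa using hi⟩
    have hsign := congrArg (Int.cast : ℤ → R) (sum_powerset_neg_one_pow_card_of_nonempty hne)
    push_cast at hsign
    rw [hsign, zero_mul]

theorem sum_range_neg_one_pow_mul_lH_mul_eP {n m : ℕ} (hn : 0 < n) (k : ℕ) (r : ZMod n) :
    ∑ i ∈ range (k + 1), (-1 : MvPolynomial (Fin m × ZMod n) ℤ) ^ i *
        lH n m ((k : ℤ) - i * n) r * eP n m i =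
      ∑ S ∈ (univ : Finset (Fin m)).powerset,
        (-1) ^ #S * (lH n m ((k : ℤ) - #S * n) r * ∏ v ∈ S, colorProd v) := by
  set g : ℕ → MvPolynomial (Fin m × ZMod n) ℤ :=
    fun i => (-1) ^ i * lH n m (k - i * n) r * eP n m i
  have hsum_k : ∑ i ∈ range (min (k + 1) (m + 1)), g i = ∑ i ∈ range (k + 1), g i := by
    refine sum_subset (range_subset_range.2 (min_le_left _ _)) fun i hi hi' => ?_
    have him : #(univ : Finset (Fin m)) < i := by
      simp only [mem_range] at hi hi'
      rw [card_univ, Fintype.card_fin]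
      omega
    simp [g, eP_eq_sum_powersetCard, powersetCard_eq_empty.2 him]
  have hsum_m : ∑ i ∈ range (min (k + 1) (m + 1)), g i = ∑ i ∈ range (m + 1), g i := by
    refine sum_subset (range_subset_range.2 (min_le_right _ _)) fun i hi hi' => ?_
    have hik : (k : ℤ) - i * n < 0 := by
      simp only [mem_range] at hi hi'
      have : k < i * n := by
        calc k < i := by omega
          _ ≤ i * n := Nat.le_mul_of_pos_right i hn
      omega
    simp [g, lH_of_neg hik]
  rw [← hsum_k, hsum_m, sum_powerset, card_univ, Fintype.card_fin]
  refine sum_congr rfl fun i _ => ?_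
  simp only [g, eP_eq_sum_powersetCard, mul_sum]
  refine sum_congr rfl fun S hS => ?_
  rw [(mem_powersetCard.1 hS).2, mul_assoc]

theorem tau_eq_alternating_h_general (n m k : ℕ) (hn : 1 < n) (r : ZMod n) :
    lT n m 1 m (k : ℤ) r =
      ∑ i ∈ Finset.range (k + 1),
        (-1 : MvPolynomial (Fin m × ZMod n) ℤ) ^ i *
          lH n m ((k : ℤ) - i * n) r * eP n m i := by
  have : NeZero n := ⟨by omega⟩
  calc lT n m 1 m k r
      = ∑ c ∈ (Nat.antidiagonalTuple m k).filter (fun c => ∀ v, ¬ n ≤ c v),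
          loopMonomial r (sortedWord c) := by
        rw [lT_one_natCast]
        exact sum_congr (filter_congr fun c _ => forall_congr' fun v => by omega) fun _ _ => rfl
    _ = ∑ S ∈ (univ : Finset (Fin m)).powerset, (-1) ^ #S *
          ∑ c ∈ (Nat.antidiagonalTuple m k).filter (fun c => ∀ v ∈ S, n ≤ c v),
            loopMonomial r (sortedWord c) := by
        -- `convert` reconciles the `Decidable` instances of the filters
        convert (sum_powerset_neg_one_pow_mul_sum_filter (Nat.antidiagonalTuple m k)
          (fun c v => n ≤ c v) (fun c => loopMonomial r (sortedWord c))).symm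
    _ = ∑ S ∈ (univ : Finset (Fin m)).powerset,
          (-1) ^ #S * (lH n m ((k : ℤ) - #S * n) r * ∏ v ∈ S, colorProd v) := by
        simp only [lH_sub_mul_prod_colorProd]
    _ = _ := (sum_range_neg_one_pow_mul_lH_mul_eP (by omega) k r).symm

/-- `τ_k^{(r)} = Σ_{i≥0} (−1)^i h_{k−in}^{(r)} e_i(p_1, …, p_m)`. -/
theorem tau_eq_alternating_h (n m k : ℕ) (hn : 1 < n) (hm : 1 ≤ m) (r : ZMod n) :
    lT n m 1 m (k : ℤ) r =
      ∑ i ∈ Finset.range (k + 1),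
        (-1 : MvPolynomial (Fin m × ZMod n) ℤ) ^ i *
          lH n m ((k : ℤ) - i * n) r * eP n m i :=
  tau_eq_alternating_h_general n m k hn r

end
end

section
/- (Column translation in the staircase Jacobi–Trudi matrix.) Let a = ⌈(n−1)(m−1)/n⌉, let λ be the conjugate partition of (n−1)δ_{m−1} padded with zeros to na parts, and let A_m be the na × na matrix whose (i,j) entry is e_{λ_i − i + j}^{(r−j+1)}(x_1,…,x_m). Then for every j with n < j ≤ na: A_m(i,j) = 0 for 1 ≤ i ≤ n−1, and A_m(i,j) = A_m(i−(n−1), j−n) for n−1 < i ≤ na; that is, column j of A_m is obtained from column j−n by shifting the nonzero entries down by n−1. -/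
noncomputable section

open Finset MvPolynomial

/-- `a = ⌈(n−1)(m−1)/n⌉`. -/
def aa (n m : ℕ) : ℕ := ((n - 1) * (m - 1) + n - 1) / n

/-- The conjugate partition of `(n−1)δ_{m−1}` (0-indexed parts, padded with zeros). -/
def lamA (n m j : ℕ) : ℕ :=
  ((Finset.range (m - 1)).filter (fun i => j < (n - 1) * (m - 1 - i))).card

/-- The `na × na` Jacobi–Trudi matrix `A_m` with `(i,j)` entry (1-indexed)
`e_{λ_i − i + j}^{(r−j+1)}`, where `λ` is the conjugate of `(n−1)δ_{m−1}`. -/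
def Amat (n m : ℕ) (r : ZMod n) :
    Matrix (Fin (n * aa n m)) (Fin (n * aa n m)) (MvPolynomial (Fin m × ZMod n) ℤ) :=
  Matrix.of fun i j =>
    lE n m ((lamA n m i : ℤ) - (i : ℕ) + (j : ℕ)) (r - ((j : ℕ) : ZMod n))


lemma lE_eq_zero_of_gt (n m : ℕ) (k : ℤ) (s : ZMod n) (hk : (m : ℤ) < k) :
    lE n m k s = 0 := by
  unfold lE
  rw [if_pos (by omega : (0:ℤ) ≤ k)]
  have he : ∀ f : Fin k.toNat → Fin m, ¬ StrictMono f := by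
    intro f hf
    have h1 := Fintype.card_le_of_injective f hf.injective
    simp only [Fintype.card_fin] at h1
    omega
  simp [he]

lemma lamA_eq (n m j : ℕ) (hn : 1 < n) : lamA n m j = m - 1 - j / (n - 1) := by
  have hpos : 0 < n - 1 := by omega
  obtain ⟨q, hq⟩ : ∃ q, j / (n - 1) = q := ⟨_, rfl⟩
  have hd : ∀ t, q < t ↔ j < (n - 1) * t := by
    intro t
    rw [← hq, Nat.div_lt_iff_lt_mul hpos, mul_comm]
  unfold lamA
  rw [hq]
  have hset : ((Finset.range (m - 1)).filter (fun i => j < (n - 1) * (m - 1 - i)))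
      = Finset.range (m - 1 - q) := by
    ext i
    simp only [Finset.mem_filter, Finset.mem_range, ← hd]
    omega
  rw [hset, Finset.card_range]

lemma na_le (n m : ℕ) (hn : 1 < n) (hm : 2 ≤ m) : n * aa n m ≤ (n - 1) * m := by
  have h1 : aa n m * n ≤ (n - 1) * (m - 1) + n - 1 := Nat.div_mul_le_self _ _
  have h2 : (n - 1) * (m - 1) + (n - 1) = (n - 1) * m := by
    rw [← Nat.mul_succ]
    congr 1
    omega
  have h3 : n * aa n m = aa n m * n := Nat.mul_comm _ _
  omega

/-- column translation: for `n < j ≤ na` (1-indexed), column `j` of `A_m`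
is obtained from column `j − n` by shifting the nonzero entries down by `n − 1`. -/
theorem Amat_column_translate (n m : ℕ) (hn : 1 < n) (hm : 2 ≤ m) (r : ZMod n)
    (j : ℕ) (hj1 : n < j) (hj2 : j ≤ n * aa n m) :
    (∀ (i : ℕ) (hi1 : 1 ≤ i) (hi2 : i ≤ n - 1) (him : i ≤ n * aa n m),
      Amat n m r ⟨i - 1, by omega⟩ ⟨j - 1, by omega⟩ = 0) ∧
    (∀ (i : ℕ) (hi1 : n - 1 < i) (hi2 : i ≤ n * aa n m),
      Amat n m r ⟨i - 1, by omega⟩ ⟨j - 1, by omega⟩ =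
        Amat n m r ⟨i - (n - 1) - 1, by omega⟩ ⟨j - n - 1, by omega⟩) := by
  have hpos : 0 < n - 1 := by omega
  have hna := na_le n m hn hm
  constructor
  · intro i hi1 hi2 him
    simp only [Amat, Matrix.of_apply]
    apply lE_eq_zero_of_gt
    have hd0 : (i - 1) / (n - 1) = 0 := Nat.div_eq_of_lt (by omega)
    rw [lamA_eq n m (i - 1) hn, hd0]
    omega
  · intro i hi1 hi2
    simp only [Amat, Matrix.of_apply]
    have hre : i - (n - 1) - 1 = i - n := by omega
    rw [hre]
    have hs : ((j - 1 : ℕ) : ZMod n) = ((j - n - 1 : ℕ) : ZMod n) := by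
      rw [show j - 1 = (j - n - 1) + n by omega, Nat.cast_add, ZMod.natCast_self, add_zero]
    rw [hs]
    congr 1
    obtain ⟨q, hq⟩ : ∃ q, (i - 1) / (n - 1) = q := ⟨_, rfl⟩
    have hq1 : 1 ≤ q := by
      rw [← hq]
      exact (Nat.one_le_div_iff hpos).mpr (by omega)
    have hq2 : q < m := by
      rw [← hq]
      refine (Nat.div_lt_iff_lt_mul hpos).mpr ?_
      have hcomm : (n - 1) * m = m * (n - 1) := Nat.mul_comm _ _
      omega
    have hq3 : (i - n) / (n - 1) = q - 1 := by
      have h4 := Nat.add_div_right (i - n) hpos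
      rw [show i - n + (n - 1) = i - 1 by omega] at h4
      omega
    rw [lamA_eq n m (i - 1) hn, lamA_eq n m (i - n) hn, hq, hq3]
    omega

end
end

section
/- (σ recursion underlying the birational R-matrix computation.) For every integer m ≥ 2 and every r ∈ ℤ/nℤ, one has σ_{(n−1)(m−1)}^{(r)}(x_1,…,x_m) = Σ_{s=0}^{n−1} ( ∏_{u=s+1}^{n−1} x_1^{(r+u+1)} ) · σ_{(n−1)(m−2)}^{(r+s+1)}(x_1,…,x_{m−1}) · ( ∏_{t=1}^{s} x_m^{(r+m−1+t)} ). -/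
/-!
Split each `τ_k(x_2, …, x_m)` by the number `t ≤ n - 1` of occurrences of `x_m`. In a weakly
increasing sequence these occurrences are its last `t` entries, so
`τ_k(x_2, …, x_m) = Σ_t τ_{k-t}(x_2, …, x_{m-1}) · x_m^{(…)} ⋯ x_m^{(…)}`, and summing against the
`x_1`-prefixes gives `σ_K(x_1, …, x_m) = Σ_t σ_{K-t}(x_1, …, x_{m-1}) · (x_m-product)`.
By pigeonhole `τ_j(x_2, …, x_{m-1}) = 0` for `j > N = (n-1)(m-2)`, so `σ_{N+d}(x_1, …, x_{m-1})` is
a forced `x_1`-prefix of length `d` times `σ_N` with colours shifted by `d`.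
-/

noncomputable section

open Finset MvPolynomial

/-- `σ_k^{(s)}(x_a, …, x_b) = ∑_{i=0}^k x_a^{(s)} x_a^{(s-1)} ⋯ x_a^{(s-i+1)} ·
τ_{k-i}^{(s-i)}(x_{a+1}, …, x_b)`. -/
def lS (n m a b k : ℕ) (s : ZMod n) : MvPolynomial (Fin m × ZMod n) ℤ :=
  ∑ i ∈ Finset.range (k + 1),
    (∏ u ∈ Finset.range i,
      if h : a - 1 < m then MvPolynomial.X ((⟨a - 1, h⟩ : Fin m), s - (u : ZMod n)) else 0) *
    lT n m (a + 1) b ((k - i : ℕ) : ℤ) (s - (i : ZMod n))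

def IsTauSeq (n a b : ℕ) {k m : ℕ} (f : Fin k → Fin m) : Prop :=
  Monotone f ∧ (∀ j, a ≤ (f j : ℕ) + 1 ∧ (f j : ℕ) + 1 ≤ b) ∧ ∀ v, #{j | f j = v} ≤ n - 1

def tauMonomial {n k m : ℕ} (s : ZMod n) (f : Fin k → Fin m) : MvPolynomial (Fin m × ZMod n) ℤ :=
  ∏ j, X (f j, s - ((j : ℕ) : ZMod n))

section Tau

variable {n m a b : ℕ}

open Classical in
theorem lT_natCast (k : ℕ) (s : ZMod n) :
    lT n m a b k s = ∑ f : Fin k → Fin m with IsTauSeq n a b f, tauMonomial s f := by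
  simp only [lT, Nat.cast_nonneg, if_true, Int.toNat_natCast]
  exact sum_congr (by ext; simp [IsTauSeq]) fun _ _ => rfl

theorem lT_of_neg {k : ℤ} (hk : k < 0) (s : ZMod n) : lT n m a b k s = 0 :=
  if_neg (not_le.mpr hk)

theorem lT_eq_zero_of_lt {k : ℕ} (hk : (n - 1) * (b + 1 - a) < k) (s : ZMod n) :
    lT n m a b k s = 0 := by
  classical
  rw [lT_natCast, sum_eq_zero]
  intro f hf
  obtain ⟨-, hwin, hcount⟩ := (mem_filter.mp hf).2
  have himage : #(univ.image f) ≤ b + 1 - a := by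
    calc #(univ.image f) ≤ #(Ico (a - 1) b) :=
          card_le_card_of_injOn Fin.val (fun _ hv => by
            obtain ⟨j, -, rfl⟩ := mem_image.mp hv
            have := hwin j
            simp only [coe_Ico, Set.mem_Ico]; omega) Fin.val_injective.injOn
      _ ≤ b + 1 - a := by simp only [Nat.card_Ico]; omega
  have := card_le_mul_card_image (univ : Finset (Fin k)) (n - 1) (fun v _ => hcount v)
  simp only [card_univ, Fintype.card_fin] at this
  exact absurd (this.trans (Nat.mul_le_mul_left _ himage)) hk.not_ge

end Tau

section FinAppend

variable {α : Type*} {k t : ℕ}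

theorem Fin.apply_lt_iff_of_card_eq [LinearOrder α] {f : Fin (k + t) → α} {c : α}
    (hf : Monotone f) (hc : ∀ j, f j ≤ c) (ht : #{j | f j = c} = t) (j : Fin (k + t)) :
    f j < c ↔ (j : ℕ) < k := by
  have hsplit := card_filter_add_card_filter_not (s := univ) (fun j => f j < c)
  simp only [not_lt, card_univ, Fintype.card_fin] at hsplit
  rw [filter_congr (fun j _ => (hc j).ge_iff_eq), ht] at hsplit
  rw [← Tuple.lt_card_lt_iff_apply_lt_of_monotone hf]
  omega

theorem Fin.monotone_append_const [Preorder α] {g : Fin k → α} {c : α} (hg : Monotone g)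
    (hc : ∀ j, g j ≤ c) : Monotone (Fin.append g fun _ : Fin t => c) := by
  intro i j hij
  induction i using Fin.addCases with
  | left i =>
    induction j using Fin.addCases with
    | left j =>
      simp only [Fin.append_left]
      exact hg hij
    | right j => simpa using hc i
  | right i =>
    induction j using Fin.addCases with
    | left j => simp [Fin.le_def] at hij; omega
    | right j => simp

theorem Fin.card_filter_append_eq [DecidableEq α] (g : Fin k → α) (h : Fin t → α) (v : α) :
    #{j | Fin.append g h j = v} = #{i | g i = v} + #{i | h i = v} := by
  simp only [card_filter, Fin.sum_univ_add, Fin.append_left, Fin.append_right]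

end FinAppend

theorem tauMonomial_append_const {n k t m : ℕ} (s : ZMod n) (g : Fin k → Fin m) (c : Fin m) :
    tauMonomial s (Fin.append g fun _ : Fin t => c) =
      tauMonomial s g * ∏ j ∈ Icc 1 t, X (c, s - ((k + t : ℕ) : ZMod n) + j) := by
  simp only [tauMonomial, Fin.prod_univ_add, Fin.append_left, Fin.append_right, Fin.val_castAdd,
    Fin.val_natAdd]
  rw [Fin.prod_univ_eq_prod_range (fun i => X (c, s - ((k + i : ℕ) : ZMod n))) t]
  congr 1
  refine prod_nbij' (fun i => t - i) (fun j => t - j) ?_ ?_ ?_ ?_ fun i hi => ?_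
  any_goals intro i hi; simp only [mem_range, mem_Icc] at hi ⊢; omega
  congr 2
  push_cast [Nat.cast_sub (mem_range.mp hi).le]
  ring

section Split

variable {n m a k t : ℕ}

theorem IsTauSeq.append_const {c : Fin m} {g : Fin k → Fin m} (hg : IsTauSeq n a c g)
    (ha : a ≤ c + 1) (ht : t ≤ n - 1) :
    IsTauSeq n a (c + 1) (Fin.append g fun _ : Fin t => c) ∧
      #{j | Fin.append g (fun _ : Fin t => c) j = c} = t := by
  obtain ⟨hmono, hwin, hcount⟩ := hg
  have hg_ne (i : Fin k) : g i ≠ c := fun h => by have := (hwin i).2; rw [h] at this; omega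
  refine ⟨⟨Fin.monotone_append_const hmono fun i => ?_, fun j => ?_, fun v => ?_⟩, ?_⟩
  · have := (hwin i).2; rw [Fin.le_def]; omega
  · induction j using Fin.addCases with
    | left i => have := hwin i; simp only [Fin.append_left]; omega
    | right i => simp only [Fin.append_right]; omega
  · rw [Fin.card_filter_append_eq]
    by_cases hv : c = v
    · subst hv; simp [hg_ne, ht]
    · simpa [hv] using hcount v
  · simp [Fin.card_filter_append_eq, hg_ne]

theorem IsTauSeq.eq_append_const {c : Fin m} {f : Fin (k + t) → Fin m}
    (hf : IsTauSeq n a (c + 1) f) (hcount : #{j | f j = c} = t) :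
    IsTauSeq n a c (fun i => f (Fin.castAdd t i)) ∧
      Fin.append (fun i => f (Fin.castAdd t i)) (fun _ => c) = f := by
  obtain ⟨hmono, hwin, hmult⟩ := hf
  have hle (j : Fin (k + t)) : f j ≤ c := by have := (hwin j).2; rw [Fin.le_def]; omega
  have hlt := Fin.apply_lt_iff_of_card_eq hmono hle hcount
  refine ⟨⟨hmono.comp (Fin.strictMono_castAdd t).monotone, fun i => ?_, fun v => ?_⟩, ?_⟩
  · have := hwin (Fin.castAdd t i)
    have := (hlt (Fin.castAdd t i)).mpr i.isLt
    rw [Fin.lt_def] at this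
    dsimp only
    omega
  · calc #{i | f (Fin.castAdd t i) = v}
        ≤ #{i | f (Fin.castAdd t i) = v} + #{i | f (Fin.natAdd k i) = v} := Nat.le_add_right _ _
      _ = #{j | f j = v} := by rw [← Fin.card_filter_append_eq, Fin.append_castAdd_natAdd]
      _ ≤ n - 1 := hmult v
  · conv_rhs => rw [← Fin.append_castAdd_natAdd (f := f)]
    congr 1
    funext i
    refine le_antisymm (not_lt.mp fun h => ?_) (hle _)
    simpa using (hlt _).mp h

open Classical in
theorem sum_tauMonomial_fiber {k t : ℕ} {c : Fin m} (ha : a ≤ c + 1) (ht : t ≤ n - 1)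
    (s : ZMod n) :
    ∑ f ∈ {f : Fin (k + t) → Fin m | IsTauSeq n a (c + 1) f} with #{j | f j = c} = t,
        tauMonomial s f =
      (∑ g : Fin k → Fin m with IsTauSeq n a c g, tauMonomial s g) *
        ∏ j ∈ Icc 1 t, X (c, s - ((k + t : ℕ) : ZMod n) + j) := by
  rw [sum_mul]
  refine sum_nbij' (fun f i => f (Fin.castAdd t i)) (fun g => Fin.append g fun _ => c)
    (fun f hf => ?_) (fun g hg => ?_) (fun f hf => ?_) (fun g _ => ?_) (fun f hf => ?_)
  all_goals simp only [mem_filter, mem_univ, true_and] at *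
  · exact (hf.1.eq_append_const hf.2).1
  · exact hg.append_const ha ht
  · exact (hf.1.eq_append_const hf.2).2
  · funext i; simp
  · conv_lhs => rw [← (hf.1.eq_append_const hf.2).2]
    exact tauMonomial_append_const s _ c

theorem lT_split (hn : 0 < n) {c : Fin m} (ha : a ≤ c + 1) (K : ℕ) (s : ZMod n) :
    lT n m a (c + 1) K s = ∑ t ∈ range n,
      lT n m a c ((K : ℤ) - t) s * ∏ j ∈ Icc 1 t, X (c, s - (K : ZMod n) + j) := by
  classical
  rw [lT_natCast, ← sum_fiberwise_of_maps_to (g := fun f => #{j | f j = c}) (t := range n)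
    fun f hf => mem_range.mpr (((mem_filter.mp hf).2.2.2 c).trans_lt (by omega))]
  refine sum_congr rfl fun t ht => ?_
  rcases le_or_gt t K with htK | htK
  · obtain ⟨k, rfl⟩ := Nat.exists_eq_add_of_le' htK
    rw [show ((k + t : ℕ) : ℤ) - t = k by push_cast; ring, lT_natCast]
    exact sum_tauMonomial_fiber ha (by rw [mem_range] at ht; omega) s
  · rw [lT_of_neg (by omega), zero_mul]
    refine sum_eq_zero fun f hf => absurd (mem_filter.mp hf).2 (ne_of_lt ?_)
    exact (card_filter_le _ _).trans_lt (by simpa using htK)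

end Split

section Sigma

variable {n m a b : ℕ}

theorem lS_split (hn : 0 < n) {c : Fin m} (ha : a ≤ c) {K : ℕ} (hK : n - 1 ≤ K) (s : ZMod n) :
    lS n m a (c + 1) K s = ∑ t ∈ range n,
      lS n m a c (K - t) s * ∏ j ∈ Icc 1 t, X (c, s - (K : ZMod n) + j) := by
  rw [lS]
  have hcolor {i : ℕ} (hi : i ∈ range (K + 1)) :
      s - (i : ZMod n) - ((K - i : ℕ) : ZMod n) = s - K := by
    rw [Nat.cast_sub (by rw [mem_range] at hi; omega)]; ring
  rw [sum_congr rfl fun i hi => by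
    rw [lT_split hn (by omega) (K - i) (s - i), mul_sum, hcolor hi], sum_comm]
  refine sum_congr rfl fun t ht => ?_
  rw [lS, sum_mul]
  refine (sum_subset (range_subset_range.mpr (by omega)) fun i hi hi' => ?_).symm.trans
    (sum_congr rfl fun i hi => ?_)
  · rw [mem_range] at hi hi'
    rw [lT_of_neg (by omega), zero_mul, mul_zero]
  · rw [mem_range] at hi ht
    rw [mul_assoc, ← Nat.cast_sub (by omega), Nat.sub_right_comm]

theorem lS_eq_of_lt (ha : a - 1 < m) (k : ℕ) (s : ZMod n) :
    lS n m a b k s = ∑ i ∈ range (k + 1),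
      (∏ u ∈ range i, X (⟨a - 1, ha⟩, s - (u : ZMod n))) *
        lT n m (a + 1) b ((k - i : ℕ) : ℤ) (s - (i : ZMod n)) := by
  simp only [lS, dif_pos ha]

theorem lS_succ_of_lT_eq_zero (ha : a - 1 < m) {k : ℕ} {s : ZMod n}
    (h : lT n m (a + 1) b ((k + 1 : ℕ) : ℤ) s = 0) :
    lS n m a b (k + 1) s = X (⟨a - 1, ha⟩, s) * lS n m a b k (s - 1) := by
  rw [lS_eq_of_lt ha, lS_eq_of_lt ha, sum_range_succ', mul_sum]
  simp only [prod_range_zero, one_mul, Nat.sub_zero, Nat.cast_zero, sub_zero, h, add_zero]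
  refine sum_congr rfl fun i _ => ?_
  rw [prod_range_succ', Nat.add_sub_add_right]
  simp only [Nat.cast_zero, sub_zero, Nat.cast_succ, sub_sub, add_comm (1 : ZMod n)]
  ring

theorem lS_add_of_le (ha : a - 1 < m) {N : ℕ} (hN : (n - 1) * (b - a) ≤ N) (d : ℕ)
    (s : ZMod n) :
    lS n m a b (N + d) s =
      (∏ u ∈ range d, X (⟨a - 1, ha⟩, s - (u : ZMod n))) * lS n m a b N (s - d) := by
  induction d generalizing s with
  | zero => simp
  | succ d ih =>
    have hvanish : lT n m (a + 1) b ((N + d + 1 : ℕ) : ℤ) s = 0 :=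
      lT_eq_zero_of_lt (by rw [Nat.add_sub_add_right]; omega) s
    rw [← add_assoc, lS_succ_of_lT_eq_zero ha hvanish, ih, prod_range_succ']
    simp only [Nat.cast_zero, sub_zero, Nat.cast_succ, sub_sub, add_comm (1 : ZMod n)]
    ring

end Sigma

theorem ZMod.natCast_self_sub_one_sub {n u : ℕ} (hu : u < n) :
    ((n - 1 - u : ℕ) : ZMod n) = -((u : ZMod n) + 1) := by
  rw [Nat.cast_sub (by omega), Nat.cast_pred (by omega), ZMod.natCast_self]
  ring

theorem ZMod.prod_range_sub_eq_prod_Icc {M : Type*} [CommMonoid M] {n t : ℕ} (ht : t < n)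
    (f : ZMod n → M) (r : ZMod n) :
    ∏ u ∈ range (n - 1 - t), f (r - u) = ∏ u ∈ Icc (t + 1) (n - 1), f (r + u + 1) := by
  refine prod_nbij' (fun u => n - 1 - u) (fun u => n - 1 - u) ?_ ?_ ?_ ?_ fun u hu => ?_
  any_goals intro u hu; simp only [mem_range, mem_Icc] at hu ⊢; omega
  rw [ZMod.natCast_self_sub_one_sub (by rw [mem_range] at hu; omega)]
  ring_nf

/-- σ recursion: `σ_{(n−1)(m−1)}^{(r)}(x_1,…,x_m)
= Σ_{s=0}^{n−1} (∏_{u=s+1}^{n−1} x_1^{(r+u+1)}) · σ_{(n−1)(m−2)}^{(r+s+1)}(x_1,…,x_{m−1})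
· (∏_{t=1}^{s} x_m^{(r+m−1+t)})`. -/
theorem sigma_recursion (n m : ℕ) (hn : 1 < n) (hm : 2 ≤ m) (r : ZMod n) :
    lS n m 1 m ((n - 1) * (m - 1)) r =
      ∑ s ∈ Finset.range n,
        (∏ u ∈ Finset.Icc (s + 1) (n - 1),
          MvPolynomial.X ((⟨0, by omega⟩ : Fin m), r + (u : ZMod n) + 1)) *
        lS n m 1 (m - 1) ((n - 1) * (m - 2)) (r + (s : ZMod n) + 1) *
        (∏ t ∈ Finset.Icc 1 s,
          MvPolynomial.X ((⟨m - 1, by omega⟩ : Fin m),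
            r + ((m - 1 : ℕ) : ZMod n) + (t : ZMod n))) := by
  have hK : (n - 1) * (m - 1) = (n - 1) * (m - 2) + (n - 1) := by
    rw [show m - 1 = m - 2 + 1 by omega, mul_add_one]
  have hKcast : (((n - 1) * (m - 1) : ℕ) : ZMod n) = -((m - 1 : ℕ) : ZMod n) := by
    rw [Nat.cast_mul, Nat.cast_pred (by omega), ZMod.natCast_self]
    ring
  have hsplit := lS_split (a := 1) (c := (⟨m - 1, by omega⟩ : Fin m)) (K := (n - 1) * (m - 1))
    (by omega) (by simp only; omega) (by rw [hK]; omega) r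
  simp only [Nat.sub_add_cancel (by omega : 1 ≤ m), hKcast, sub_neg_eq_add] at hsplit
  rw [hsplit]
  refine sum_congr rfl fun t ht => ?_
  rw [mem_range] at ht
  rw [hK, Nat.add_sub_assoc (by omega),
    lS_add_of_le (N := (n - 1) * (m - 2)) (by omega) (by rw [Nat.sub_sub]),
    ZMod.natCast_self_sub_one_sub ht, sub_neg_eq_add, ← add_assoc]
  congr 2
  exact ZMod.prod_range_sub_eq_prod_Icc ht (fun x => X ((⟨0, by omega⟩ : Fin m), x)) r

end
end

section
/- For every integer m ≥ 2, every r ∈ ℤ/nℤ, and every s ∈ ℤ/nℤ, the variable x_m^{(s)} does not divide the polynomial σ_{(n−1)(m−1)}^{(r)}(x_1,…,x_m). -/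
/-!
Evaluate at the integer point that is `0` at `x_m^{(s)}` and `1` at every other variable.
Divisibility by `x_m^{(s)}` forces the value `0`. But every term of `σ` is nonnegative there,
and the summand `x_1^{n-1} τ_{(n-1)(m-2)}(x_2, …, x_m)` contains the monomial in which each of
`x_2, …, x_{m-1}` occurs `n - 1` times; it avoids `x_m` and so evaluates to `1`.
-/

noncomputable section

open Finset MvPolynomial

variable {n m : ℕ}

lemma eval_eq_zero_of_X_dvd {σ R : Type*} [CommSemiring R] {v : σ} {p : MvPolynomial σ R}
    {x : σ → R} (hdvd : X v ∣ p) (hx : x v = 0) : eval x p = 0 := by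
  obtain ⟨q, rfl⟩ := hdvd
  simp [hx]

section Evaluation

variable {x : Fin m × ZMod n → ℤ}

lemma eval_lT_nonneg (hx : ∀ w, 0 ≤ x w) (a b : ℕ) (k : ℤ) (s : ZMod n) :
    0 ≤ eval x (lT n m a b k s) := by
  unfold lT
  split_ifs
  · simp only [map_sum, map_prod, eval_X]
    exact sum_nonneg fun f _ => prod_nonneg fun j _ => hx _
  · simp

lemma prod_le_eval_lT (hx : ∀ w, 0 ≤ x w) {a b k : ℕ} (s : ZMod n) (f : Fin k → Fin m)
    (hmono : Monotone f) (hwindow : ∀ j, a ≤ (f j : ℕ) + 1 ∧ (f j : ℕ) + 1 ≤ b)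
    (hmult : ∀ v, (univ.filter fun j => f j = v).card ≤ n - 1) :
    ∏ j, x (f j, s - ((j : ℕ) : ZMod n)) ≤ eval x (lT n m a b k s) := by
  rw [lT, if_pos (Int.natCast_nonneg k)]
  simp only [Int.toNat_natCast, map_sum, map_prod, eval_X]
  exact single_le_sum (f := fun g : Fin k → Fin m => ∏ j, x (g j, s - ((j : ℕ) : ZMod n)))
    (fun g _ => prod_nonneg fun j _ => hx _)
    (mem_filter.2 ⟨mem_univ f, hmono, hwindow, hmult⟩)

lemma eval_lS_summand_le (hx : ∀ w, 0 ≤ x w) {a b k i : ℕ} (s : ZMod n) (hi : i ≤ k) :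
    eval x ((∏ u ∈ range i,
        if h : a - 1 < m then X ((⟨a - 1, h⟩ : Fin m), s - (u : ZMod n)) else 0) *
      lT n m (a + 1) b ((k - i : ℕ) : ℤ) (s - (i : ZMod n))) ≤ eval x (lS n m a b k s) := by
  rw [lS, map_sum]
  refine single_le_sum (N := ℤ) (fun j _ => ?_) (mem_range.2 (Nat.lt_succ_of_le hi))
  rw [map_mul, map_prod]
  refine mul_nonneg (prod_nonneg fun u _ => ?_) (eval_lT_nonneg hx _ _ _ _)
  split_ifs
  · exact (eval_X (f := x) _).symm ▸ hx _
  · simp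

end Evaluation

def blockSeq (n m : ℕ) (j : Fin ((n - 1) * (m - 2))) : Fin m :=
  ⟨1 + j / (n - 1), by
    have := Nat.div_lt_of_lt_mul j.isLt
    generalize (j : ℕ) / (n - 1) = d at this
    omega⟩

lemma blockSeq_val (j : Fin ((n - 1) * (m - 2))) : (blockSeq n m j : ℕ) = 1 + j / (n - 1) :=
  rfl

lemma blockSeq_val_add_one_lt (j : Fin ((n - 1) * (m - 2))) : (blockSeq n m j : ℕ) + 1 < m := by
  have := Nat.div_lt_of_lt_mul j.isLt
  rw [blockSeq_val]
  generalize (j : ℕ) / (n - 1) = d at this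
  omega

lemma blockSeq_mem_window (j : Fin ((n - 1) * (m - 2))) :
    2 ≤ (blockSeq n m j : ℕ) + 1 ∧ (blockSeq n m j : ℕ) + 1 ≤ m :=
  ⟨Nat.add_le_add_right (Nat.le_add_right 1 _) 1, (blockSeq_val_add_one_lt j).le⟩

lemma blockSeq_monotone : Monotone (blockSeq n m) := fun _ _ hjj' =>
  Fin.le_def.2 (Nat.add_le_add_left (Nat.div_le_div_right (Fin.le_def.1 hjj')) 1)

lemma card_blockSeq_fiber_le (v : Fin m) :
    (univ.filter fun j => blockSeq n m j = v).card ≤ n - 1 := by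
  -- inside a fibre the quotient by `n - 1` is fixed, so the remainder determines `j`
  calc (univ.filter fun j => blockSeq n m j = v).card ≤ (range (n - 1)).card := by
        refine card_le_card_of_injOn (fun j => (j : ℕ) % (n - 1)) (fun j _ => ?_) ?_
        · have hpos : 0 < n - 1 := Nat.pos_of_ne_zero fun h => by
            have := j.isLt
            simp [h] at this
          exact mem_range.2 (Nat.mod_lt _ hpos)
        · intro j hj j' hj' hmod
          simp only [coe_filter, mem_univ, true_and, Set.mem_ofPred_eq] at hj hj'
          have hdiv : (j : ℕ) / (n - 1) = j' / (n - 1) := by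
            have := congrArg Fin.val (hj.trans hj'.symm)
            rw [blockSeq_val, blockSeq_val] at this
            omega
          exact Fin.ext (by rw [← Nat.div_add_mod j (n - 1), ← Nat.div_add_mod j' (n - 1), hdiv,
            show (j : ℕ) % (n - 1) = j' % (n - 1) from hmod])
    _ = n - 1 := card_range _

lemma one_le_eval_lS (hm : 2 ≤ m) (r : ZMod n) {x : Fin m × ZMod n → ℤ}
    (hx : ∀ w, 0 ≤ x w)
    (hx_one : ∀ w : Fin m × ZMod n, (w.1 : ℕ) + 1 < m → x w = 1) :
    1 ≤ eval x (lS n m 1 m ((n - 1) * (m - 1)) r) := by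
  have hi : n - 1 ≤ (n - 1) * (m - 1) := Nat.le_mul_of_pos_right _ (by omega)
  have hk : (n - 1) * (m - 1) - (n - 1) = (n - 1) * (m - 2) := by
    rw [← Nat.mul_sub_one, show m - 1 - 1 = m - 2 by omega]
  refine le_trans ?_ (eval_lS_summand_le hx r hi)
  have hprefix : ∀ u ∈ range (n - 1), eval x
      (if h : 1 - 1 < m then X ((⟨1 - 1, h⟩ : Fin m), r - (u : ZMod n)) else 0) = 1 := by
    intro u _
    rw [dif_pos (by omega), eval_X]
    exact hx_one _ (by dsimp only; omega)
  have hblock :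
      ∏ j, x (blockSeq n m j, r - ((n - 1 : ℕ) : ZMod n) - ((j : ℕ) : ZMod n)) = 1 :=
    prod_eq_one fun j _ => hx_one _ (blockSeq_val_add_one_lt j)
  rw [map_mul, map_prod, prod_eq_one hprefix, one_mul, hk, ← hblock]
  exact prod_le_eval_lT hx _ _ blockSeq_monotone blockSeq_mem_window card_blockSeq_fiber_le

/-- no variable `x_m^{(s)}` divides `σ_{(n−1)(m−1)}^{(r)}(x_1,…,x_m)`. -/
theorem xm_not_dvd_sigma (n m : ℕ) (hm : 2 ≤ m) (r : ZMod n) (s : ZMod n) :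
    ¬ MvPolynomial.X ((⟨m - 1, by omega⟩ : Fin m), s) ∣
        lS n m 1 m ((n - 1) * (m - 1)) r := by
  set v : Fin m × ZMod n := (⟨m - 1, by omega⟩, s)
  set x : Fin m × ZMod n → ℤ := Set.indicator {v}ᶜ 1
  have hx : ∀ w, 0 ≤ x w := fun w => Set.indicator_nonneg (fun _ _ => zero_le_one) w
  have hx_one : ∀ w : Fin m × ZMod n, (w.1 : ℕ) + 1 < m → x w = 1 := by
    intro w hw
    refine Set.indicator_of_mem (fun hwv => ?_) 1
    rw [Set.mem_singleton_iff.1 hwv] at hw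
    simp only [v] at hw
    omega
  intro hdvd
  have hzero : eval x (lS n m 1 m ((n - 1) * (m - 1)) r) = 0 :=
    eval_eq_zero_of_X_dvd hdvd (Set.indicator_of_notMem (by simp) 1)
  have := one_le_eval_lS hm r hx hx_one
  omega

end
end

section
/- For every integer m ≥ 1 and every t ∈ ℤ/nℤ, one has τ_{(n−1)m}^{(t)}(x_1,…,x_m) = ∏_{u=0}^{n−2} e_m^{(t−u)}(x_1,…,x_m); in particular the top-degree τ is the product of the n−1 monomials e_m^{(t)}, e_m^{(t−1)}, …, e_m^{(t−n+2)}. -/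
noncomputable section

open Finset MvPolynomial

/-! A weakly increasing sequence of length `(n-1)m` in `[1, m]` taking each value at most `n-1`
times must take each value exactly `n-1` times, so only `j ↦ ⌊j/(n-1)⌋ + 1` contributes and
`τ` is a single monomial. Writing `j = (n-1)i + u` with `u < n-1`, the colour `t - j` equals
`t - u + i` because `n - 1 ≡ -1 (mod n)`, so the `u`-th block of that monomial is the monomial
`e_m^{(t-u)}`. -/

theorem List.count_ofFn {α : Type*} [DecidableEq α] {N : ℕ} (f : Fin N → α) (a : α) :
    (List.ofFn f).count a = #{j | f j = a} := by
  rw [← Multiset.coe_count, ← Fin.univ_val_map, Multiset.count_map, Finset.card_def,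
    Finset.filter_val]
  simp only [eq_comm]

theorem Fin.monotone_ext_of_card_fiber {α : Type*} [PartialOrder α] [DecidableEq α] {N : ℕ}
    {f g : Fin N → α} (hf : Monotone f) (hg : Monotone g)
    (h : ∀ a, #{j | f j = a} = #{j | g j = a}) : f = g :=
  List.ofFn_injective <| List.Perm.eq_of_sortedLE hf.sortedLE_ofFn hg.sortedLE_ofFn <|
    List.perm_iff_count.mpr fun a => by simp only [List.count_ofFn, h]

theorem Finset.card_fiber_eq_of_card_fiber_le {ι κ : Type*} [Fintype ι] [Fintype κ]
    [DecidableEq κ] {f : ι → κ} {c : ℕ} (hcard : Fintype.card ι = c * Fintype.card κ)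
    (hle : ∀ b, #{i | f i = b} ≤ c) (b : κ) : #{i | f i = b} = c := by
  have hsum : ∑ b, #{i | f i = b} = ∑ _b : κ, c := by
    rw [← Finset.card_eq_sum_card_fiberwise fun i _ => Finset.mem_univ (f i)]
    simp [hcard, mul_comm]
  exact (Finset.sum_eq_sum_iff_of_le fun b _ => hle b).mp hsum b (Finset.mem_univ b)

def blockEquiv (c m : ℕ) : Fin m × Fin c ≃ Fin (c * m) :=
  finProdFinEquiv.trans (finCongr (mul_comm m c))

theorem blockEquiv_apply_val {c m : ℕ} (p : Fin m × Fin c) :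
    (blockEquiv c m p : ℕ) = p.2 + c * p.1 := rfl

def blockIndex {c m : ℕ} (j : Fin (c * m)) : Fin m := ((blockEquiv c m).symm j).1

theorem blockIndex_blockEquiv {c m : ℕ} (p : Fin m × Fin c) :
    blockIndex (blockEquiv c m p) = p.1 := by
  simp [blockIndex]

theorem monotone_blockIndex {c m : ℕ} : Monotone (blockIndex : Fin (c * m) → Fin m) :=
  fun _ _ h => Nat.div_le_div_right (c := c) h

theorem card_blockIndex_fiber {c m : ℕ} (i : Fin m) : #{j | blockIndex (c := c) j = i} = c := by
  rw [Finset.card_equiv (blockEquiv c m).symm (t := {i} ×ˢ univ)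
    fun j => by rw [Finset.mem_filter, Finset.mem_product, blockIndex]; simp [eq_comm]]
  simp

theorem eq_blockIndex_of_card_fiber_le {c m : ℕ} {f : Fin (c * m) → Fin m} (hf : Monotone f)
    (hle : ∀ i, #{j | f j = i} ≤ c) : f = blockIndex :=
  Fin.monotone_ext_of_card_fiber hf monotone_blockIndex fun i => by
    rw [card_blockIndex_fiber, Finset.card_fiber_eq_of_card_fiber_le (by simp) hle]

theorem lE_self (n m : ℕ) (s : ZMod n) :
    lE n m m s = ∏ i : Fin m, X (i, s + ((i : ℕ) : ZMod n)) := by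
  rw [lE, if_pos (Int.natCast_nonneg m), Int.toNat_natCast,
    Finset.sum_eq_single_of_mem id (by simpa using strictMono_id)]
  · rfl
  · intro f hf hne
    exact absurd (Finset.mem_filter.mp hf).2.eq_id hne

theorem lT_top (n m : ℕ) (t : ZMod n) :
    lT n m 1 m (((n - 1) * m : ℕ) : ℤ) t =
      ∏ j : Fin ((n - 1) * m), X (blockIndex j, t - ((j : ℕ) : ZMod n)) := by
  rw [lT, if_pos (Int.natCast_nonneg _), Int.toNat_natCast,
    Finset.sum_eq_single_of_mem blockIndex]
  · exact Finset.mem_filter.mpr ⟨mem_univ _, monotone_blockIndex,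
      fun j => ⟨by omega, (blockIndex j).isLt⟩, fun i => (card_blockIndex_fiber i).le⟩
  · rintro f hf hne
    obtain ⟨-, hmono, -, hle⟩ := Finset.mem_filter.mp hf
    exact absurd (eq_blockIndex_of_card_fiber_le hmono hle) hne

theorem tau_top_eq_prod_em_general (n m : ℕ) (hn : 1 < n) (t : ZMod n) :
    lT n m 1 m (((n - 1) * m : ℕ) : ℤ) t =
      ∏ u ∈ Finset.range (n - 1), lE n m (m : ℤ) (t - (u : ZMod n)) := by
  have hc : ((n - 1 : ℕ) : ZMod n) = -1 := by
    rw [Nat.cast_sub hn.le, ZMod.natCast_self, Nat.cast_one, zero_sub]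
  rw [lT_top, ← Fintype.prod_equiv (blockEquiv (n - 1) m) _ _ fun _ => rfl,
    Fintype.prod_prod_type_right, ← Fin.prod_univ_eq_prod_range]
  refine Fintype.prod_congr _ _ fun u => ?_
  rw [lE_self]
  refine Fintype.prod_congr _ _ fun i => ?_
  rw [blockIndex_blockEquiv, blockEquiv_apply_val, Nat.cast_add, Nat.cast_mul, hc]
  congr 2
  ring

/-- the top-degree `τ` is a monomial:
`τ_{(n−1)m}^{(t)}(x_1,…,x_m) = ∏_{u=0}^{n−2} e_m^{(t−u)}(x_1,…,x_m)`. -/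
theorem tau_top_eq_prod_em (n m : ℕ) (hn : 1 < n) (hm : 1 ≤ m) (t : ZMod n) :
    lT n m 1 m (((n - 1) * m : ℕ) : ℤ) t =
      ∏ u ∈ Finset.range (n - 1), lE n m (m : ℤ) (t - (u : ZMod n)) :=
  tau_top_eq_prod_em_general n m hn t

end
end
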